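/- Let ξ satisfy P(ξ = ±√3) = 1/6, P(ξ = 0) = 2/3, and let R = (Γ - Λ) + Σ·ξ + Λ·ξ² with Γ, Σ, Λ ∈ ℂ. Then E[log|R|] = (1/6)·log(|(Γ + 2Λ)² - 3Σ²|·|Γ - Λ|⁴). In particular E[log|R|] < 0 if and only if |(Γ + 2Λ)² - 3Σ²|·|Γ - Λ|⁴ < 1. -/

import Mathlib

/-! The law of `ξ` is supported on `{√3, -√3, 0}`, so `E[log |R|]` is the weighted sum
`(1/6) log |R(√3)| + (1/6) log |R(-√3)| + (2/3) log |R(0)|`, and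
`R(√3) R(-√3) = (Γ + 2Λ)² - 3Σ²`, `R(0) = Γ - Λ`. -/

open MeasureTheory ProbabilityTheory

section FiniteRange

variable {Ω α E : Type*} [MeasurableSpace Ω] [MeasurableSpace α] [MeasurableSingletonClass α]
  {μ : Measure Ω} {X : Ω → α}

theorem ae_mem_of_sum_measure_eq_one [IsProbabilityMeasure μ] (hX : Measurable X) {s : Finset α}
    (hs : ∑ x ∈ s, μ {ω | X ω = x} = 1) : ∀ᵐ ω ∂μ, X ω ∈ s := by
  have hunion : {ω | X ω ∈ s} = ⋃ x ∈ s, {ω | X ω = x} := by ext; simp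
  rw [ae_iff_measure_eq (p := fun ω ↦ X ω ∈ s) (hX s.measurableSet).nullMeasurableSet,
    measure_univ, hunion,
    measure_biUnion_finset (f := fun x ↦ {ω | X ω = x}) _
      fun x _ ↦ hX (measurableSet_singleton x), hs]
  exact fun x _ y _ hxy ↦ Set.disjoint_left.2 fun ω hx hy ↦ hxy (hx.symm.trans hy)

theorem integral_comp_eq_sum_of_ae_mem [NormedAddCommGroup E] [NormedSpace ℝ E]
    [CompleteSpace E] [IsFiniteMeasure μ] (hX : Measurable X) {f : α → E}
    (hf : StronglyMeasurable f) {s : Finset α} (hs : ∀ᵐ ω ∂μ, X ω ∈ s) :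
    ∫ ω, f (X ω) ∂μ = ∑ x ∈ s, μ.real {ω | X ω = x} • f x := by
  have hs' : ∀ᵐ x ∂μ.map X, x ∈ s := (ae_map_iff hX.aemeasurable s.measurableSet).2 hs
  rw [← integral_map hX.aemeasurable hf.aestronglyMeasurable,
    ← Measure.restrict_eq_self_of_ae_mem hs', setIntegral_finset s IntegrableOn.finset]
  refine Finset.sum_congr rfl fun x _ ↦ ?_
  rw [map_measureReal_apply hX (measurableSet_singleton x)]
  rfl

end FiniteRange

section

variable (G S L : ℂ)

lemma ofReal_sqrt_three_sq : ((Real.sqrt 3 : ℝ) : ℂ) ^ 2 = 3 := by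
  norm_cast; exact Real.sq_sqrt (by norm_num)

lemma quadratic_eval_sqrt_three :
    (G - L) + S * ((Real.sqrt 3 : ℝ) : ℂ) + L * ((Real.sqrt 3 : ℝ) : ℂ) ^ 2 =
      G + 2 * L + (Real.sqrt 3 : ℂ) * S := by
  linear_combination L * ofReal_sqrt_three_sq

lemma quadratic_eval_neg_sqrt_three :
    (G - L) + S * ((-Real.sqrt 3 : ℝ) : ℂ) + L * ((-Real.sqrt 3 : ℝ) : ℂ) ^ 2 =
      G + 2 * L - (Real.sqrt 3 : ℂ) * S := by
  push_cast; linear_combination L * ofReal_sqrt_three_sq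

lemma add_sqrt_three_mul_sub_sqrt_three_mul :
    (G + 2 * L + (Real.sqrt 3 : ℂ) * S) * (G + 2 * L - (Real.sqrt 3 : ℂ) * S) =
      (G + 2 * L) ^ 2 - 3 * S ^ 2 := by
  linear_combination -S ^ 2 * ofReal_sqrt_three_sq

end

lemma log_norm_weighted_sum_eq_log_mul_pow {u v w : ℂ} (hu : u ≠ 0) (hv : v ≠ 0)
    (hw : w ≠ 0) :
    (1 / 6 : ℝ) * Real.log ‖u‖ + 1 / 6 * Real.log ‖v‖ + 2 / 3 * Real.log ‖w‖ =
      1 / 6 * Real.log (‖u * v‖ * ‖w‖ ^ 4) := by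
  rw [norm_mul, Real.log_mul (by positivity) (by positivity), Real.log_mul (by positivity)
    (by positivity), Real.log_pow]
  push_cast; ring

lemma sum_sqrt_three_neg_sqrt_three_zero {M : Type*} [AddCommMonoid M] (g : ℝ → M) :
    ∑ x ∈ ({Real.sqrt 3, -Real.sqrt 3, 0} : Finset ℝ), g x =
      g (Real.sqrt 3) + g (-Real.sqrt 3) + g 0 := by
  have hpos : 0 < Real.sqrt 3 := by positivity
  rw [Finset.sum_insert (by simp; linarith),
    Finset.sum_insert (by simp), Finset.sum_singleton, add_assoc]

theorem stmt8 {Ω : Type*} [MeasureSpace Ω] [IsProbabilityMeasure (ℙ : Measure Ω)]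
    (ξ : Ω → ℝ) (hmeas : Measurable ξ)
    (h1 : ℙ {ω | ξ ω = Real.sqrt 3} = 1 / 6)
    (h2 : ℙ {ω | ξ ω = -Real.sqrt 3} = 1 / 6)
    (h3 : ℙ {ω | ξ ω = 0} = 2 / 3)
    (G S L : ℂ) (hGL : G - L ≠ 0)
    (hp : G + 2 * L + (Real.sqrt 3 : ℂ) * S ≠ 0)
    (hm : G + 2 * L - (Real.sqrt 3 : ℂ) * S ≠ 0) :
    ∫ ω, Real.log (‖(G - L) + S * (ξ ω : ℂ) + L * (ξ ω : ℂ) ^ 2‖) ∂ℙ =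
      (1 / 6) * Real.log (‖(G + 2 * L) ^ 2 - 3 * S ^ 2‖ *
        ‖G - L‖ ^ 4) ∧
    (∫ ω, Real.log (‖(G - L) + S * (ξ ω : ℂ) + L * (ξ ω : ℂ) ^ 2‖) ∂ℙ < 0 ↔
      ‖(G + 2 * L) ^ 2 - 3 * S ^ 2‖ * ‖G - L‖ ^ 4 < 1) := by
  have hsupp : ∀ᵐ ω ∂ℙ, ξ ω ∈ ({Real.sqrt 3, -Real.sqrt 3, 0} : Finset ℝ) := by
    refine ae_mem_of_sum_measure_eq_one hmeas ?_
    rw [sum_sqrt_three_neg_sqrt_three_zero, h1, h2, h3, ← ENNReal.toReal_eq_one_iff,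
      ENNReal.toReal_add, ENNReal.toReal_add] <;>
      norm_num [ENNReal.toReal_div, ENNReal.div_eq_top]
  have hlaw : ∫ ω, Real.log (‖(G - L) + S * (ξ ω : ℂ) + L * (ξ ω : ℂ) ^ 2‖) ∂ℙ =
      1 / 6 * Real.log ‖G + 2 * L + (Real.sqrt 3 : ℂ) * S‖ +
        1 / 6 * Real.log ‖G + 2 * L - (Real.sqrt 3 : ℂ) * S‖ +
          2 / 3 * Real.log ‖G - L‖ := by
    rw [integral_comp_eq_sum_of_ae_mem hmeas
      (f := fun x : ℝ ↦ Real.log ‖(G - L) + S * x + L * x ^ 2‖)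
      (by fun_prop : Measurable _).stronglyMeasurable hsupp,
      sum_sqrt_three_neg_sqrt_three_zero, quadratic_eval_sqrt_three,
      quadratic_eval_neg_sqrt_three]
    simp [measureReal_def, h1, h2, h3]
  have hmain := hlaw.trans (log_norm_weighted_sum_eq_log_mul_pow hp hm hGL)
  rw [add_sqrt_three_mul_sub_sqrt_three_mul] at hmain
  refine ⟨hmain, ?_⟩
  have hpos : 0 < ‖(G + 2 * L) ^ 2 - 3 * S ^ 2‖ * ‖G - L‖ ^ 4 := by
    rw [← add_sqrt_three_mul_sub_sqrt_three_mul, norm_mul]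
    exact mul_pos (mul_pos (norm_pos_iff.2 hp) (norm_pos_iff.2 hm))
      (pow_pos (norm_pos_iff.2 hGL) 4)
  rw [hmain, ← smul_eq_mul, smul_neg_iff_of_pos_left (by norm_num), Real.log_neg_iff hpos]
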